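/- arXiv:1608.07255 — 2 statements merged into one kernel-verified Lean document; each statement's English description precedes it below -/
import Mathlib

section
/- Let G be an acyclic directed graph, φ : G → (Γ, ≺) a CPP-extension of G, and ≺_G the linear order on E(G) induced from ≺ via φ1 (e1 ≺_G e2 iff φ1(e1) ≺ φ1(e2)). For any edge e of G with e' = φ1(e): (1) e = I(t(e))^- in (G, ≺_G) iff e' = I(t(e'))^- in (Γ, ≺); (2) e = I(t(e))^+ in (G, ≺_G) iff e' = I(t(e'))^+ in (Γ, ≺); (3) e = O(s(e))^- in (G, ≺_G) iff e' = O(s(e'))^- in (Γ, ≺); (4) e = O(s(e))^+ in (G, ≺_G) iff e' = O(s(e'))^+ in (Γ, ≺). -/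
variable {V E : Type}

/-- Edge reachability `e1 → e2`: a directed path of edges `f_0, …, f_k` with `k ≥ 1`,
`f_0 = e1`, `f_k = e2` and `t f_{i-1} = s f_i`. -/
def eReach (s t : E → V) : E → E → Prop :=
  Relation.TransGen (fun a b => t a = s b)

/-- Vertex reachability `v → w`: a directed path from `v` to `w` using at least one edge. -/
def vReach (s t : E → V) : V → V → Prop :=
  Relation.TransGen (fun v w => ∃ e, s e = v ∧ t e = w)

/-- A directed graph is acyclic if no vertex reaches itself. -/
def Acyclic (s t : E → V) : Prop := ∀ v, ¬ vReach s t v v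

/-- `I(v)`: incoming edges of `v`. -/
def inE (t : E → V) (v : V) : Set E := {e | t e = v}

/-- `O(v)`: outgoing edges of `v`. -/
def outE (s : E → V) (v : V) : Set E := {e | s e = v}

/-- Convex hull `X̄` of `X` in the linear order `le`: the interval `{y | X^- ≤ y ≤ X^+}`
(empty when `X` is empty). -/
def hull (le : E → E → Prop) (X : Set E) : Set E :=
  {y | ∃ a ∈ X, ∃ b ∈ X, le a y ∧ le y b}

/-- The strict order associated to a linear order `le`. -/
def ltOf (le : E → E → Prop) (a b : E) : Prop := le a b ∧ a ≠ b

/-- A source: no incoming edges. -/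
def IsSource (t : E → V) (v : V) : Prop := inE t v = ∅

/-- A sink: no outgoing edges. -/
def IsSink (s : E → V) (v : V) : Prop := outE s v = ∅

/-- A progressive graph: acyclic and every source and every sink has degree 1. -/
def Progressive (s t : E → V) : Prop :=
  Acyclic s t ∧
  ∀ v, (IsSource t v ∨ IsSink s v) → ({e | s e = v ∨ t e = v} : Set E).ncard = 1

/-- `I(G)`: input edges, those whose source vertex is a source of `G`. -/
def inputE (s t : E → V) : Set E := {e | IsSource t (s e)}

/-- `O(G)`: output edges, those whose target vertex is a sink of `G`. -/
def outputE (s t : E → V) : Set E := {e | IsSink s (t e)}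

/-- Condition (U1) = (P1): `e1 → e2` implies `e1 ≺ e2`. -/
def U1 (s t : E → V) (le : E → E → Prop) : Prop :=
  ∀ e1 e2, eReach s t e1 e2 → ltOf le e1 e2

/-- Condition (U2): for every vertex `v`, `Ī(v) ∩ Ō(v) = ∅` and `Ē(v) = Ī(v) ∪ Ō(v)`. -/
def U2 (s t : E → V) (le : E → E → Prop) : Prop :=
  ∀ v, hull le (inE t v) ∩ hull le (outE s v) = ∅ ∧
    hull le (inE t v ∪ outE s v) = hull le (inE t v) ∪ hull le (outE s v)

/-- Condition (U3). -/
def U3 (s t : E → V) (le : E → E → Prop) : Prop :=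
  ∀ v1 v2,
    ((inE t v1 ∩ hull le (inE t v2)).Nonempty →
      hull le (inE t v1) ⊆ hull le (inE t v2)) ∧
    ((outE s v1 ∩ hull le (outE s v2)).Nonempty →
      hull le (outE s v1) ⊆ hull le (outE s v2))

/-- Condition (U4): for every progressive vertex `v`, `I(G) ∩ Ō(v) = ∅` and `O(G) ∩ Ī(v) = ∅`. -/
def U4 (s t : E → V) (le : E → E → Prop) : Prop :=
  ∀ v, ¬ IsSource t v → ¬ IsSink s v →
    inputE s t ∩ hull le (outE s v) = ∅ ∧ outputE s t ∩ hull le (inE t v) = ∅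

/-- An upward planar order: a linear order on the edges satisfying (U1), (U2), (U3). -/
def IsUPO (s t : E → V) (le : E → E → Prop) : Prop :=
  IsLinearOrder E le ∧ U1 s t le ∧ U2 s t le ∧ U3 s t le

/-- Condition (P2). -/
def P2 (s t : E → V) (le : E → E → Prop) : Prop :=
  ∀ e1 e2 e3, ltOf le e1 e2 → ltOf le e2 e3 → eReach s t e1 e3 →
    eReach s t e1 e2 ∨ eReach s t e2 e3

/-- Condition (P̃2). -/
def P2t (s t : E → V) (le : E → E → Prop) : Prop :=
  ∀ e1 e2 e3, ltOf le e1 e2 → ltOf le e2 e3 → t e1 = s e3 →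
    eReach s t e1 e2 ∨ eReach s t e2 e3

/-- Condition (P3) (for distinct vertices). -/
def P3 (s t : E → V) (le : E → E → Prop) : Prop :=
  ∀ v1 v2, v1 ≠ v2 →
    ((inE t v1 ∩ hull le (inE t v2)).Nonempty → vReach s t v1 v2) ∧
    ((outE s v1 ∩ hull le (outE s v2)).Nonempty → vReach s t v2 v1)

/-- Condition (A): for distinct `v1 v2`, `∅ ≠ Ī(v1) ⊆ Ī(v2)` implies `v1 → v2`,
and `∅ ≠ Ō(v1) ⊆ Ō(v2)` implies `v2 → v1`. -/
def CondA (s t : E → V) (le : E → E → Prop) : Prop :=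
  ∀ v1 v2, v1 ≠ v2 →
    ((hull le (inE t v1)).Nonempty → hull le (inE t v1) ⊆ hull le (inE t v2) →
      vReach s t v1 v2) ∧
    ((hull le (outE s v1)).Nonempty → hull le (outE s v1) ⊆ hull le (outE s v2) →
      vReach s t v2 v1)

/-- A POP-graph: a progressive graph with a planar order ((P1) and (P2)). -/
def IsPOP (s t : E → V) (le : E → E → Prop) : Prop :=
  Progressive s t ∧ IsLinearOrder E le ∧ U1 s t le ∧ P2 s t le

/-- `U(v) = {w | Ō(v) ⊊ Ō(w)}` when `O(v) ≠ ∅`, and `U(v) = ∅` otherwise. -/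
def Uset (s : E → V) (le : E → E → Prop) (v : V) : Set V :=
  {w | (outE s v).Nonempty ∧ hull le (outE s v) ⊂ hull le (outE s w)}

/-- `D(v) = {w | Ī(v) ⊊ Ī(w)}` when `I(v) ≠ ∅`, and `D(v) = ∅` otherwise. -/
def Dset (t : E → V) (le : E → E → Prop) (v : V) : Set V :=
  {w | (inE t v).Nonempty ∧ hull le (inE t v) ⊂ hull le (inE t w)}

/-- A CPP-extension of `G = (s, t)`: a POP-graph `(s', t', le')` with an embedding
`(φ0, φ1)` satisfying (E1)–(E4). -/
def IsCPP {V' E' : Type} (s t : E → V) (s' t' : E' → V')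
    (le' : E' → E' → Prop) (φ0 : V → V') (φ1 : E → E') : Prop :=
  Function.Injective φ0 ∧ Function.Injective φ1 ∧
  (∀ e, s' (φ1 e) = φ0 (s e)) ∧ (∀ e, t' (φ1 e) = φ0 (t e)) ∧
  IsPOP s' t' le' ∧
  -- (E1)
  Set.range φ0 = {v : V' | ¬ IsSource t' v ∧ ¬ IsSink s' v} ∧
  -- (E2)
  Nat.card E' = Nat.card E + ({v : V | IsSource t v}).ncard + ({v : V | IsSink s v}).ncard ∧
  -- (E3)
  (∀ v w, IsSource t v → IsSink s w → inE t' (φ0 v) ∩ outE s' (φ0 w) = ∅) ∧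
  -- (E4)
  (∀ e' : E', e' ∉ Set.range φ1 → e' ∉ inputE s' t' → e' ∉ outputE s' t' →
    ((∃ a ∈ outE s' (s' e'), ltOf le' a e') ∧ (∃ b ∈ outE s' (s' e'), ltOf le' e' b)) ∨
    ((∃ a ∈ inE t' (t' e'), ltOf le' a e') ∧ (∃ b ∈ inE t' (t' e'), ltOf le' e' b)))

/-!
Every edge of `Γ` outside `φ1(E(G))` is "extra". A source `v` of `G` is not a source of `Γ`
(E1), so some extra edge enters `φ0 v`; dually some extra edge leaves `φ0 w` for every sink `w`.
These edges are distinct (E3), and by (E2) there are no others: every extra edge is the only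
edge entering `φ0 v` for a source `v`, or the only edge leaving `φ0 w` for a sink `w`.

Now let `x` be an extra edge entering `φ0 u`, where `u` has an incoming edge in `G`. Then `x`
is the only edge leaving its source, so (E4) places `x` strictly between two edges of
`I(φ0 u)`. Hence the extremes of `I(φ0 u)` are images of edges of `G`, and dually for `O`.
-/

open Set Function

section LinearOrderRel

variable {α : Type} {le : α → α → Prop}

instance isTrans_ltOf [IsPartialOrder α le] : IsTrans α (ltOf le) :=
  ⟨fun _ _ _ hab hbc =>
    ⟨trans_of le hab.1 hbc.1, fun hac => hbc.2 (antisymm hbc.1 (hac ▸ hab.1))⟩⟩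

instance irrefl_ltOf : Std.Irrefl (ltOf le) :=
  ⟨fun _ h => h.2 rfl⟩

variable [IsLinearOrder α le] [Finite α]

theorem exists_forall_le_of_nonempty {A : Set α} (hA : A.Nonempty) :
    ∃ m ∈ A, ∀ x ∈ A, le m x := by
  obtain ⟨m, hm, hmin⟩ := (Finite.wellFounded_of_trans_of_irrefl (ltOf le)).has_min A hA
  refine ⟨m, hm, fun x hx => (total_of le m x).elim id fun hxm => ?_⟩
  obtain rfl | hne := eq_or_ne x m
  · exact hxm
  · exact absurd ⟨hxm, hne⟩ (hmin x hx)

/-- If every element of `A` outside `P` has a strictly smaller element in `A`, then the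
minimum of `A` lies in `P`. -/
theorem forall_mem_inter_le_iff {A P : Set α}
    (hP : ∀ x ∈ A, x ∉ P → ∃ a ∈ A, ltOf le a x) (y : α) :
    (∀ f ∈ A ∩ P, le y f) ↔ ∀ f ∈ A, le y f := by
  refine ⟨fun hy f hf => ?_, fun hy f hf => hy f hf.1⟩
  obtain ⟨m, hm, hmin⟩ := exists_forall_le_of_nonempty (le := le) ⟨f, hf⟩
  have hmP : m ∈ P := by
    by_contra hmP
    obtain ⟨a, ha, ham, hne⟩ := hP m hm hmP
    exact hne (antisymm ham (hmin a ha))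
  exact trans_of le (hy m ⟨hm, hmP⟩) (hmin f hf)

theorem forall_mem_inter_ge_iff {A P : Set α}
    (hP : ∀ x ∈ A, x ∉ P → ∃ b ∈ A, ltOf le x b) (y : α) :
    (∀ f ∈ A ∩ P, le f y) ↔ ∀ f ∈ A, le f y :=
  forall_mem_inter_le_iff (le := swap le)
    (fun x hx hxP => (hP x hx hxP).imp fun _ ⟨hb, hxb, hne⟩ => ⟨hb, hxb, hne.symm⟩) y

end LinearOrderRel

theorem exists_eq_singleton_of_pairwise_disjoint {ι X : Type*} [Finite X] {F : ι → Set X}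
    (hne : ∀ i, (F i).Nonempty) (hdisj : Pairwise (Disjoint on F))
    (hcard : Nat.card X ≤ Nat.card ι) (x : X) : ∃ i, F i = {x} := by
  choose g hg using hne
  have hg_inj : Injective g := fun i j hij =>
    hdisj.eq (not_disjoint_iff.2 ⟨g i, hg i, hij ▸ hg j⟩)
  have hg_surj := (hg_inj.bijective_of_nat_card_le hcard).2
  obtain ⟨i, rfl⟩ := hg_surj x
  refine ⟨i, eq_singleton_iff_unique_mem.2 ⟨hg i, fun y hy => ?_⟩⟩
  obtain ⟨j, rfl⟩ := hg_surj y
  rw [hdisj.eq (not_disjoint_iff.2 ⟨g j, hy, hg j⟩)]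

section Embedding

variable {V' E' : Type} {t : E → V} {t' : E' → V'} {φ0 : V → V'} {φ1 : E → E'}

theorem forall_mem_inE_inter_range_iff (hφ0 : Injective φ0) (ht : ∀ e, t' (φ1 e) = φ0 (t e))
    (e : E) (p : E' → Prop) :
    (∀ f ∈ inE t' (t' (φ1 e)) ∩ range φ1, p f) ↔ ∀ f, t f = t e → p (φ1 f) := by
  refine ⟨fun H f hf => H _ ⟨show t' (φ1 f) = t' (φ1 e) by rw [ht, ht, hf], f, rfl⟩, ?_⟩
  rintro H _ ⟨hf, f, rfl⟩
  exact H f (hφ0 (by rw [← ht, ← ht]; exact hf))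

theorem not_mem_range_of_isSource (hφ0 : Injective φ0) (ht : ∀ e, t' (φ1 e) = φ0 (t e))
    {v : V} (hv : IsSource t v) {x : E'} (hx : t' x = φ0 v) : x ∉ range φ1 := by
  rintro ⟨g, rfl⟩
  have hg : g ∈ inE t v := hφ0 ((ht g).symm.trans hx)
  rw [hv] at hg
  exact hg

end Embedding

namespace IsCPP

variable {V' E' : Type} {s t : E → V} {s' t' : E' → V'} {le' : E' → E' → Prop}
  {φ0 : V → V'} {φ1 : E → E'}

theorem not_isSource_and_not_isSink (h : IsCPP s t s' t' le' φ0 φ1) (v : V) :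
    ¬ IsSource t' (φ0 v) ∧ ¬ IsSink s' (φ0 v) := by
  have hv := mem_range_self (f := φ0) v
  rwa [h.2.2.2.2.2.1] at hv

theorem card_compl_range_eq [Finite V] [Finite E'] (h : IsCPP s t s' t' le' φ0 φ1) :
    Nat.card ↥(range φ1)ᶜ = Nat.card (↥{v | IsSource t v} ⊕ ↥{w | IsSink s w}) := by
  obtain ⟨-, hφ1, -, -, -, -, hE2, -⟩ := h
  rw [Nat.card_coe_set_eq, ncard_compl, ncard_range_of_injective hφ1, Nat.card_sum,
    Nat.card_coe_set_eq, Nat.card_coe_set_eq, hE2]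
  omega

theorem unique_inE_or_unique_outE_of_not_mem_range [Finite V] [Finite E']
    (h : IsCPP s t s' t' le' φ0 φ1) {x : E'} (hx : x ∉ range φ1) :
    (∃ v, IsSource t v ∧ t' x = φ0 v ∧ ∀ y, t' y = φ0 v → y = x) ∨
      (∃ w, IsSink s w ∧ s' x = φ0 w ∧ ∀ y, s' y = φ0 w → y = x) := by
  have hinner := h.not_isSource_and_not_isSink
  have hcard := h.card_compl_range_eq
  obtain ⟨hφ0, -, hs, ht, -, -, -, hE3, -⟩ := h
  let F : (↥{v | IsSource t v} ⊕ ↥{w | IsSink s w}) → Set ↥(range φ1)ᶜ :=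
    Sum.elim (fun v => {y | t' y = φ0 v}) (fun w => {y | s' y = φ0 w})
  have hne : ∀ i, (F i).Nonempty := by
    rintro (⟨v, hv⟩ | ⟨w, hw⟩)
    · obtain ⟨y, hy⟩ := nonempty_iff_ne_empty.2 (hinner v).1
      exact ⟨⟨y, not_mem_range_of_isSource hφ0 ht hv hy⟩, hy⟩
    · obtain ⟨y, hy⟩ := nonempty_iff_ne_empty.2 (hinner w).2
      exact ⟨⟨y, not_mem_range_of_isSource (t := s) hφ0 hs hw hy⟩, hy⟩
  have hdisj : Pairwise (Disjoint on F) := by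
    rintro (⟨v₁, hv₁⟩ | ⟨w₁, hw₁⟩) (⟨v₂, hv₂⟩ | ⟨w₂, hw₂⟩) hne <;>
      refine disjoint_left.2 fun y hy₁ hy₂ => ?_ <;>
      simp only [F, Sum.elim_inl, Sum.elim_inr, mem_ofPred_eq] at hy₁ hy₂
    · exact hne (congrArg _ (Subtype.ext (hφ0 (hy₁.symm.trans hy₂))))
    · exact (hE3 v₁ w₂ hv₁ hw₂).subset ⟨hy₁, hy₂⟩
    · exact (hE3 v₂ w₁ hv₂ hw₁).subset ⟨hy₂, hy₁⟩
    · exact hne (congrArg _ (Subtype.ext (hφ0 (hy₁.symm.trans hy₂))))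
  obtain ⟨i, hi⟩ := exists_eq_singleton_of_pairwise_disjoint hne hdisj hcard.le ⟨x, hx⟩
  have hxi : (⟨x, hx⟩ : ↥(range φ1)ᶜ) ∈ F i := hi ▸ rfl
  rcases i with ⟨v, hv⟩ | ⟨w, hw⟩
  · refine .inl ⟨v, hv, hxi, fun y hy => ?_⟩
    have hyi : (⟨y, not_mem_range_of_isSource hφ0 ht hv hy⟩ : ↥(range φ1)ᶜ) ∈ F (.inl ⟨v, hv⟩) :=
      hy
    rw [hi] at hyi
    exact congrArg Subtype.val hyi
  · refine .inr ⟨w, hw, hxi, fun y hy => ?_⟩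
    have hyi : (⟨y, not_mem_range_of_isSource (t := s) hφ0 hs hw hy⟩ : ↥(range φ1)ᶜ) ∈
        F (.inr ⟨w, hw⟩) := hy
    rw [hi] at hyi
    exact congrArg Subtype.val hyi

theorem exists_lt_and_exists_gt_of_mem_inE [Finite V] [Finite E']
    (h : IsCPP s t s' t' le' φ0 φ1) {e : E} {x : E'} (hxe : x ∈ inE t' (t' (φ1 e)))
    (hx : x ∉ range φ1) :
    (∃ a ∈ inE t' (t' (φ1 e)), ltOf le' a x) ∧ (∃ b ∈ inE t' (t' (φ1 e)), ltOf le' x b) := by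
  have hinner := h.not_isSource_and_not_isSink
  have hcls := h.unique_inE_or_unique_outE_of_not_mem_range hx
  obtain ⟨hφ0, -, -, ht, -, -, -, -, hE4⟩ := h
  have hxt : t' x = φ0 (t e) := hxe.trans (ht e)
  rcases hcls with ⟨v, hv, hxv, -⟩ | ⟨w, -, hxw, huniq⟩
  · exact (Nonempty.ne_empty ⟨e, hφ0 (hxt.symm.trans hxv)⟩ hv).elim
  · have hin : x ∉ inputE s' t' := fun H => (hinner w).1 (hxw ▸ H)
    have hout : x ∉ outputE s' t' := fun H => (hinner (t e)).2 (hxt ▸ H)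
    rcases hE4 x hx hin hout with ⟨⟨a, ha, hax⟩, -⟩ | ⟨hlt, hgt⟩
    · exact absurd (huniq a (ha.trans hxw)) hax.2
    · rw [← hxe]
      exact ⟨hlt, hgt⟩

theorem exists_lt_and_exists_gt_of_mem_outE [Finite V] [Finite E']
    (h : IsCPP s t s' t' le' φ0 φ1) {e : E} {x : E'} (hxe : x ∈ outE s' (s' (φ1 e)))
    (hx : x ∉ range φ1) :
    (∃ a ∈ outE s' (s' (φ1 e)), ltOf le' a x) ∧ (∃ b ∈ outE s' (s' (φ1 e)), ltOf le' x b) := by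
  have hinner := h.not_isSource_and_not_isSink
  have hcls := h.unique_inE_or_unique_outE_of_not_mem_range hx
  obtain ⟨hφ0, -, hs, -, -, -, -, -, hE4⟩ := h
  have hxs : s' x = φ0 (s e) := hxe.trans (hs e)
  rcases hcls with ⟨v, -, hxv, huniq⟩ | ⟨w, hw, hxw, -⟩
  · have hin : x ∉ inputE s' t' := fun H => (hinner (s e)).1 (hxs ▸ H)
    have hout : x ∉ outputE s' t' := fun H => (hinner v).2 (hxv ▸ H)
    rcases hE4 x hx hin hout with ⟨hlt, hgt⟩ | ⟨⟨a, ha, hax⟩, -⟩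
    · rw [← hxe]
      exact ⟨hlt, hgt⟩
    · exact absurd (huniq a (ha.trans hxv)) hax.2
  · exact (Nonempty.ne_empty ⟨e, hφ0 (hxs.symm.trans hxw)⟩ hw).elim

end IsCPP

theorem cpp_preserves_extremes_general {V E V' E' : Type} [Fintype V] [Fintype E']
    (s t : E → V) (s' t' : E' → V') (le' : E' → E' → Prop)
    (φ0 : V → V') (φ1 : E → E')
    (hCPP : IsCPP s t s' t' le' φ0 φ1) (e : E) :
    -- (1) e = I(t(e))⁻ in (G, ≺_G)  ↔  φ1 e = I(t(φ1 e))⁻ in (Γ, ≺)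
    ((∀ f, t f = t e → le' (φ1 e) (φ1 f)) ↔
      (∀ f', t' f' = t' (φ1 e) → le' (φ1 e) f')) ∧
    -- (2) e = I(t(e))⁺ ↔ φ1 e = I(t(φ1 e))⁺
    ((∀ f, t f = t e → le' (φ1 f) (φ1 e)) ↔
      (∀ f', t' f' = t' (φ1 e) → le' f' (φ1 e))) ∧
    -- (3) e = O(s(e))⁻ ↔ φ1 e = O(s(φ1 e))⁻
    ((∀ f, s f = s e → le' (φ1 e) (φ1 f)) ↔
      (∀ f', s' f' = s' (φ1 e) → le' (φ1 e) f')) ∧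
    -- (4) e = O(s(e))⁺ ↔ φ1 e = O(s(φ1 e))⁺
    ((∀ f, s f = s e → le' (φ1 f) (φ1 e)) ↔
      (∀ f', s' f' = s' (φ1 e) → le' f' (φ1 e))) := by
  have hin x hx hxr := hCPP.exists_lt_and_exists_gt_of_mem_inE (e := e) (x := x) hx hxr
  have hout x hx hxr := hCPP.exists_lt_and_exists_gt_of_mem_outE (e := e) (x := x) hx hxr
  obtain ⟨hφ0, -, hs, ht, ⟨-, hlin, -⟩, -⟩ := hCPP
  have hI := forall_mem_inE_inter_range_iff hφ0 ht e
  have hO := forall_mem_inE_inter_range_iff hφ0 hs e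
  refine ⟨?_, ?_, ?_, ?_⟩
  · exact (hI (le' (φ1 e))).symm.trans
      (forall_mem_inter_le_iff (fun x hx hxr => (hin x hx hxr).1) _)
  · exact (hI (le' · (φ1 e))).symm.trans
      (forall_mem_inter_ge_iff (fun x hx hxr => (hin x hx hxr).2) _)
  · exact (hO (le' (φ1 e))).symm.trans
      (forall_mem_inter_le_iff (fun x hx hxr => (hout x hx hxr).1) _)
  · exact (hO (le' · (φ1 e))).symm.trans
      (forall_mem_inter_ge_iff (fun x hx hxr => (hout x hx hxr).2) _)

/-- a CPP-extension preserves the properties of being the minimum/maximum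
incoming/outgoing edge (the order on `E(G)` being induced via `φ1`). -/
theorem cpp_preserves_extremes {V E V' E' : Type} [Fintype V] [Fintype E] [Fintype V'] [Fintype E']
    (s t : E → V) (s' t' : E' → V') (le' : E' → E' → Prop)
    (φ0 : V → V') (φ1 : E → E') (hac : Acyclic s t)
    (hCPP : IsCPP s t s' t' le' φ0 φ1) (e : E) :
    -- (1) e = I(t(e))⁻ in (G, ≺_G)  ↔  φ1 e = I(t(φ1 e))⁻ in (Γ, ≺)
    ((∀ f, t f = t e → le' (φ1 e) (φ1 f)) ↔
      (∀ f', t' f' = t' (φ1 e) → le' (φ1 e) f')) ∧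
    -- (2) e = I(t(e))⁺ ↔ φ1 e = I(t(φ1 e))⁺
    ((∀ f, t f = t e → le' (φ1 f) (φ1 e)) ↔
      (∀ f', t' f' = t' (φ1 e) → le' f' (φ1 e))) ∧
    -- (3) e = O(s(e))⁻ ↔ φ1 e = O(s(φ1 e))⁻
    ((∀ f, s f = s e → le' (φ1 e) (φ1 f)) ↔
      (∀ f', s' f' = s' (φ1 e) → le' (φ1 e) f')) ∧
    -- (4) e = O(s(e))⁺ ↔ φ1 e = O(s(φ1 e))⁺
    ((∀ f, s f = s e → le' (φ1 f) (φ1 e)) ↔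
      (∀ f', s' f' = s' (φ1 e) → le' f' (φ1 e))) :=
  cpp_preserves_extremes_general s t s' t' le' φ0 φ1 hCPP e
end

section
/- Let G be an acyclic directed graph and φ : G → (Γ, ≺) a CPP-extension of G. Then the linear order ≺_G on E(G) defined by e1 ≺_G e2 iff φ1(e1) ≺ φ1(e2) is an upward planar order on G, i.e., ≺_G satisfies (U1), (U2) and (U3). -/
variable {V E : Type}

/-! By (E1), (E3) and the count (E2), every edge of `Γ` outside `φ1(E(G))` is the only edge
entering the image of a source of `G`, or the only edge leaving the image of a sink. By (E4) such
an edge is never the first or last element of `I(φ0 v)` (resp. `O(φ0 v)`) when `v` has incoming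
(resp. outgoing) edges in `G`, so the hulls of `I(v)` and `O(v)` are the traces of those of
`I(φ0 v)` and `O(φ0 v)`. It remains to check (U2) and (U3) in the POP-graph `Γ` at vertices
that are neither sources nor sinks. Both come from (P2) applied to a path of length one through
the vertex; in (U3) one of the two alternatives it leaves would close a directed cycle. -/

open Function Relation Set

noncomputable abbrev linearOrderOfIsLinearOrder {α : Type} (le : α → α → Prop)
    [IsLinearOrder α le] : LinearOrder α where
  le := le
  le_refl := refl_of le
  le_trans _ _ _ := trans_of le
  le_antisymm _ _ := antisymm
  le_total := total_of le
  toDecidableLE := Classical.decRel le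

theorem hull_mono {le : E → E → Prop} {X Y : Set E} (h : X ⊆ Y) : hull le X ⊆ hull le Y := by
  rintro y ⟨a, ha, b, hb, hay, hyb⟩
  exact ⟨a, h ha, b, h hb, hay, hyb⟩

theorem subset_hull [Preorder E] (X : Set E) : X ⊆ hull (· ≤ ·) X :=
  fun x hx => ⟨x, hx, x, hx, le_rfl, le_rfl⟩

theorem hull_subset_of_subset_hull [Preorder E] {X Y : Set E} (h : X ⊆ hull (· ≤ ·) Y) :
    hull (· ≤ ·) X ⊆ hull (· ≤ ·) Y := by
  rintro y ⟨a, ha, b, hb, hay, hyb⟩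
  obtain ⟨c, hc, -, -, hca, -⟩ := h ha
  obtain ⟨-, -, d, hd, -, hbd⟩ := h hb
  exact ⟨c, hc, d, hd, hca.trans hay, hyb.trans hbd⟩

theorem mem_hull_orderDual [LinearOrder E] {X : Set E} {y : E} :
    y ∈ hull (E := Eᵒᵈ) (· ≤ ·) X ↔ y ∈ hull (· ≤ ·) X := by
  constructor <;> rintro ⟨a, ha, b, hb, hay, hyb⟩ <;> exact ⟨b, hb, a, ha, hyb, hay⟩

theorem StrictMono.hull_eq_preimage {E' : Type} [LinearOrder E] [Preorder E'] {f : E → E'}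
    (hf : StrictMono f) (X : Set E) : hull (· ≤ ·) X = f ⁻¹' hull (· ≤ ·) (f '' X) := by
  ext y
  constructor
  · rintro ⟨a, ha, b, hb, hay, hyb⟩
    exact ⟨f a, mem_image_of_mem f ha, f b, mem_image_of_mem f hb, hf.monotone hay,
      hf.monotone hyb⟩
  · rintro ⟨_, ⟨a, ha, rfl⟩, _, ⟨b, hb, rfl⟩, hay, hyb⟩
    exact ⟨a, ha, b, hb, hf.le_iff_le.1 hay, hf.le_iff_le.1 hyb⟩

theorem subset_hull_inter_of_between [LinearOrder E] {X Y : Set E} (hY : Y.Finite)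
    (h : ∀ y ∈ Y, y ∉ X → (∃ a ∈ Y, a < y) ∧ ∃ b ∈ Y, y < b) : Y ⊆ hull (· ≤ ·) (Y ∩ X) := by
  intro y hy
  obtain ⟨m, hm, hmin⟩ := exists_min_image Y id hY ⟨y, hy⟩
  obtain ⟨M, hM, hmax⟩ := exists_max_image Y id hY ⟨y, hy⟩
  have hmX : m ∈ X := by
    by_contra hmX
    obtain ⟨a, ha, ham⟩ := (h m hm hmX).1
    exact (hmin a ha).not_gt ham
  have hMX : M ∈ X := by
    by_contra hMX
    obtain ⟨b, hb, hMb⟩ := (h M hM hMX).2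
    exact (hmax b hb).not_gt hMb
  exact ⟨m, ⟨hm, hmX⟩, M, ⟨hM, hMX⟩, hmin y hy, hmax y hy⟩

section Paths

variable {s t : E → V}

theorem eReach.map {V' E' : Type} {s' t' : E' → V'} {φ0 : V → V'} {φ1 : E → E'}
    (hs : ∀ e, s' (φ1 e) = φ0 (s e)) (ht : ∀ e, t' (φ1 e) = φ0 (t e)) {a b : E}
    (h : eReach s t a b) : eReach s' t' (φ1 a) (φ1 b) :=
  TransGen.lift (p := fun a b => t' a = s' b) φ1
    (fun a b hab => (ht a).trans ((congrArg φ0 hab).trans (hs b).symm)) _ _ h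

theorem eReach.swap {a b : E} (h : eReach t s a b) : eReach s t b a := by
  induction h with
  | single h => exact .single h.symm
  | tail _ h ih => exact .head h.symm ih

theorem eReach_of_t_eq {a b c : E} (h : eReach s t a b) (hc : t c = t a) : eReach s t c b := by
  obtain ⟨u, hau, hub⟩ := TransGen.head'_iff.1 h
  exact TransGen.head' (hc.trans hau) hub

theorem exists_inE_eReach_of_eReach {a b : E} (h : eReach s t a b) (hab : t a ≠ s b) :
    ∃ g ∈ inE t (s b), eReach s t a g := by
  obtain ⟨g, hag, hgb⟩ := TransGen.tail'_iff.1 h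
  rcases reflTransGen_iff_eq_or_transGen.1 hag with rfl | hag
  · exact absurd hgb hab
  · exact ⟨g, hgb, hag⟩

end Paths

section OrderedGraph

variable [LinearOrder E] {s t : E → V}

theorem lt_of_eReach (hU1 : U1 s t (· ≤ ·)) {a b : E} (h : eReach s t a b) : a < b :=
  lt_iff_le_and_ne.2 (hU1 a b h)

theorem lt_of_t_eq_s (hU1 : U1 s t (· ≤ ·)) {a b : E} (h : t a = s b) : a < b :=
  lt_of_eReach hU1 (.single h)

theorem le_of_reflTransGen (hU1 : U1 s t (· ≤ ·)) {a b : E}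
    (h : ReflTransGen (fun a b => t a = s b) a b) : a ≤ b := by
  rcases reflTransGen_iff_eq_or_transGen.1 h with rfl | h
  exacts [le_rfl, (lt_of_eReach hU1 h).le]

theorem not_eReach_of_t_eq (hU1 : U1 s t (· ≤ ·)) {a b : E} (h : t a = t b) :
    ¬ eReach s t a b :=
  fun hab => (lt_of_eReach hU1 (eReach_of_t_eq hab h.symm)).false

theorem P2.eReach_or (hP2 : P2 s t (· ≤ ·)) {a b c : E} (hab : a < b) (hbc : b < c)
    (hac : eReach s t a c) : eReach s t a b ∨ eReach s t b c :=
  hP2 a b c (lt_iff_le_and_ne.1 hab) (lt_iff_le_and_ne.1 hbc) hac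

theorem U1.orderDual (hU1 : U1 s t (· ≤ ·)) : U1 (E := Eᵒᵈ) t s (· ≤ ·) := fun a b hab =>
  have hba := hU1 b a hab.swap
  ⟨hba.1, hba.2.symm⟩

theorem P2.orderDual (hP2 : P2 s t (· ≤ ·)) : P2 (E := Eᵒᵈ) t s (· ≤ ·) :=
  fun a b c hab hbc hac =>
    (hP2 c b a ⟨hbc.1, hbc.2.symm⟩ ⟨hab.1, hab.2.symm⟩ hac.swap).symm.imp
      eReach.swap eReach.swap

theorem u2_of_mem_hull (hU1 : U1 s t (· ≤ ·))
    (h : ∀ v a b y, t a = v → s b = v → a ≤ y → y ≤ b →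
      y ∈ hull (· ≤ ·) (inE t v) ∪ hull (· ≤ ·) (outE s v)) :
    U2 s t (· ≤ ·) := by
  intro v
  refine ⟨eq_empty_of_forall_notMem ?_, (Subset.antisymm ?_
    (union_subset (hull_mono subset_union_left) (hull_mono subset_union_right)))⟩
  · rintro y ⟨⟨a, ha, b, hb, -, hyb⟩, c, hc, d, hd, hcy, -⟩
    exact (lt_of_t_eq_s hU1 (Eq.trans hb hc.symm)).not_ge (hcy.trans hyb)
  · rintro y ⟨a, ha | ha, b, hb | hb, hay, hyb⟩
    · exact Or.inl ⟨a, ha, b, hb, hay, hyb⟩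
    · exact h v a b y ha hb hay hyb
    · exact absurd (hay.trans hyb) (lt_of_t_eq_s hU1 (Eq.trans hb ha.symm)).not_ge
    · exact Or.inr ⟨a, ha, b, hb, hay, hyb⟩

theorem mem_hull_inE_union_hull_outE (hU1 : U1 s t (· ≤ ·)) (hP2 : P2 s t (· ≤ ·)) {v : V}
    {a b y : E} (ha : t a = v) (hb : s b = v) (hay : a ≤ y) (hyb : y ≤ b) :
    y ∈ hull (· ≤ ·) (inE t v) ∪ hull (· ≤ ·) (outE s v) := by
  rcases hay.eq_or_lt with rfl | hay
  · exact Or.inl (subset_hull _ ha)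
  rcases hyb.eq_or_lt with rfl | hyb
  · exact Or.inr (subset_hull _ hb)
  rcases hP2.eReach_or hay hyb (.single (ha.trans hb.symm)) with hy | hy
  · obtain ⟨u, hau, huy⟩ := TransGen.head'_iff.1 hy
    exact Or.inr ⟨u, hau.symm.trans ha, b, hb, le_of_reflTransGen hU1 huy, hyb.le⟩
  · obtain ⟨g, hyg, hgb⟩ := TransGen.tail'_iff.1 hy
    exact Or.inl ⟨a, ha, g, hgb.trans hb, hay.le, le_of_reflTransGen hU1 hyg⟩

theorem exists_inE_eReach_of_mem_hull (hU1 : U1 s t (· ≤ ·)) (hP2 : P2 s t (· ≤ ·))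
    {v w : V} (hvw : v ≠ w) {o : E} (ho : s o = w) {e i j : E} (he : t e = v) (hi : t i = w)
    (hj : t j = w) (hie : i ≤ e) (hej : e ≤ j) : ∃ g ∈ inE t w, eReach s t e g := by
  have hie : i < e := hie.lt_of_ne (by rintro rfl; exact hvw (he.symm.trans hi))
  have heo : e < o := hej.trans_lt (lt_of_t_eq_s hU1 (hj.trans ho.symm))
  rcases hP2.eReach_or hie heo (.single (hi.trans ho.symm)) with hie' | heo'
  · exact absurd hej (lt_of_eReach hU1 (eReach_of_t_eq hie' (hj.trans hi.symm))).not_ge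
  · obtain ⟨g, hg, heg⟩ := exists_inE_eReach_of_eReach heo' (by rw [he, ho]; exact hvw)
    exact ⟨g, ho ▸ hg, heg⟩

theorem le_of_eReach_inE (hU1 : U1 s t (· ≤ ·)) (hP2 : P2 s t (· ≤ ·)) {v w : V} (hvw : v ≠ w)
    {o : E} (ho : s o = v) {e i g f : E} (he : t e = v) (hi : t i = w) (hie : i ≤ e)
    (hg : t g = w) (heg : eReach s t e g) (hf : t f = v) : i ≤ f := by
  by_contra! hfi
  have hio : i < o := hie.trans_lt (lt_of_t_eq_s hU1 (he.trans ho.symm))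
  rcases hP2.eReach_or hfi hio (.single (hf.trans ho.symm)) with hfi' | hio'
  · exact hie.not_gt (lt_of_eReach hU1 (eReach_of_t_eq hfi' (he.trans hf.symm)))
  · -- `i` reaches an in-edge `k` of `v`, hence `g`: a cycle through `w`
    obtain ⟨k, hk, hik⟩ := exists_inE_eReach_of_eReach hio' (by rw [hi, ho]; exact hvw.symm)
    exact not_eReach_of_t_eq hU1 (hi.trans hg.symm)
      (hik.trans (eReach_of_t_eq heg ((Eq.trans hk ho).trans he.symm)))

theorem hull_inE_subset_of_u1_p2 (hU1 : U1 s t (· ≤ ·)) (hP2 : P2 s t (· ≤ ·)) {v w : V}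
    (hv : (outE s v).Nonempty) (hw : (outE s w).Nonempty)
    (h : (inE t v ∩ hull (· ≤ ·) (inE t w)).Nonempty) :
    hull (· ≤ ·) (inE t v) ⊆ hull (· ≤ ·) (inE t w) := by
  obtain ⟨e, he, i, hi, j, hj, hie, hej⟩ := h
  rcases eq_or_ne v w with rfl | hvw
  · exact subset_rfl
  obtain ⟨o, ho⟩ := hw
  obtain ⟨o', ho'⟩ := hv
  obtain ⟨g, hg, heg⟩ := exists_inE_eReach_of_mem_hull hU1 hP2 hvw ho he hi hj hie hej
  exact hull_subset_of_subset_hull fun f hf =>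
    ⟨i, hi, g, hg, le_of_eReach_inE hU1 hP2 hvw ho' he hi hie hg heg hf,
      (lt_of_eReach hU1 (eReach_of_t_eq heg (Eq.trans hf he.symm))).le⟩

theorem hull_outE_subset_of_u1_p2 (hU1 : U1 s t (· ≤ ·)) (hP2 : P2 s t (· ≤ ·)) {v w : V}
    (hv : (inE t v).Nonempty) (hw : (inE t w).Nonempty)
    (h : (outE s v ∩ hull (· ≤ ·) (outE s w)).Nonempty) :
    hull (· ≤ ·) (outE s v) ⊆ hull (· ≤ ·) (outE s w) := by
  obtain ⟨e, he, hew⟩ := h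
  intro y hy
  exact (mem_hull_orderDual (E := E)).1 <|
    hull_inE_subset_of_u1_p2 (E := Eᵒᵈ) hU1.orderDual hP2.orderDual hv hw
      ⟨e, he, (mem_hull_orderDual (E := E)).2 hew⟩ ((mem_hull_orderDual (E := E)).2 hy)

end OrderedGraph

theorem subsingleton_and_subset_iUnion_of_ncard_le {ι α : Type} {X : Set α} (hX : X.Finite)
    {f : ι → Set α} (hne : ∀ i, (f i).Nonempty) (hsub : ∀ i, f i ⊆ X)
    (hdisj : Pairwise (Disjoint on f)) (hcard : X.ncard ≤ Nat.card ι) :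
    (∀ i, (f i).Subsingleton) ∧ X ⊆ ⋃ i, f i := by
  choose g hg using hne
  have : Finite X := hX
  have hinj : Injective fun i => (⟨g i, hsub i (hg i)⟩ : X) := fun i j hij =>
    have hgij : g i = g j := congrArg Subtype.val hij
    hdisj.eq (not_disjoint_iff.2 ⟨g i, hg i, hgij ▸ hg j⟩)
  have hsurj := (hinj.bijective_of_nat_card_le (by rwa [Nat.card_coe_set_eq])).2
  have hg_eq : ∀ i, ∀ y ∈ f i, y = g i := by
    intro i y hy
    obtain ⟨j, hj⟩ := hsurj ⟨y, hsub i hy⟩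
    have hgj : g j = y := congrArg Subtype.val hj
    obtain rfl : i = j := hdisj.eq (not_disjoint_iff.2 ⟨y, hy, hgj ▸ hg j⟩)
    exact hgj.symm
  refine ⟨fun i y hy z hz => (hg_eq i y hy).trans (hg_eq i z hz).symm, fun x hx => ?_⟩
  obtain ⟨j, hj⟩ := hsurj ⟨x, hx⟩
  have hgj : g j = x := congrArg Subtype.val hj
  exact mem_iUnion.2 ⟨j, hgj ▸ hg j⟩

section Extension

variable {V' E' : Type} {s t : E → V} {s' t' : E' → V'} {le' : E' → E' → Prop}
  {φ0 : V → V'} {φ1 : E → E'}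

theorem IsCPP.not_isSource_and_not_isSink_s19 (h : IsCPP s t s' t' le' φ0 φ1) (v : V) :
    ¬ IsSource t' (φ0 v) ∧ ¬ IsSink s' (φ0 v) := by
  obtain ⟨-, -, -, -, -, hE1, -⟩ := h
  exact hE1.subset (mem_range_self v)

theorem IsCPP.nonempty_inE (h : IsCPP s t s' t' le' φ0 φ1) (v : V) :
    (inE t' (φ0 v)).Nonempty :=
  nonempty_iff_ne_empty.2 (h.not_isSource_and_not_isSink_s19 v).1

theorem IsCPP.nonempty_outE (h : IsCPP s t s' t' le' φ0 φ1) (v : V) :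
    (outE s' (φ0 v)).Nonempty :=
  nonempty_iff_ne_empty.2 (h.not_isSource_and_not_isSink_s19 v).2

theorem IsCPP.image_inE_subset (h : IsCPP s t s' t' le' φ0 φ1) (v : V) :
    φ1 '' inE t v ⊆ inE t' (φ0 v) := by
  obtain ⟨-, -, -, ht, -⟩ := h
  rintro _ ⟨e, he, rfl⟩
  exact (ht e).trans (congrArg φ0 he)

theorem IsCPP.image_outE_subset (h : IsCPP s t s' t' le' φ0 φ1) (v : V) :
    φ1 '' outE s v ⊆ outE s' (φ0 v) := by
  obtain ⟨-, -, hs, -⟩ := h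
  rintro _ ⟨e, he, rfl⟩
  exact (hs e).trans (congrArg φ0 he)

/-- The sets `I(φ0 v)`, `v` a source of `G`, and `O(φ0 w)`, `w` a sink, are nonempty by (E1),
pairwise disjoint by (E3), and by (E2) exactly as many as the edges outside `φ1(E(G))`. -/
theorem IsCPP.exists_isSource_or_exists_isSink [Fintype V] [Finite E']
    (h : IsCPP s t s' t' le' φ0 φ1) {e' : E'} (he' : e' ∉ range φ1) :
    (∃ v, IsSource t v ∧ t' e' = φ0 v ∧ (inE t' (φ0 v)).Subsingleton) ∨
    ∃ w, IsSink s w ∧ s' e' = φ0 w ∧ (outE s' (φ0 w)).Subsingleton := by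
  obtain ⟨hφ0, hφ1, hs, ht, -, -, hE2, hE3, -⟩ := id h
  let f : {v | IsSource t v} ⊕ {w | IsSink s w} → Set E' :=
    Sum.elim (fun v => inE t' (φ0 v)) (fun w => outE s' (φ0 w))
  have hne : ∀ i, (f i).Nonempty := by
    rintro (⟨v, -⟩ | ⟨w, -⟩)
    exacts [h.nonempty_inE v, h.nonempty_outE w]
  have hsub : ∀ i, f i ⊆ (range φ1)ᶜ := by
    rintro (⟨v, hv⟩ | ⟨w, hw⟩) _ he ⟨e, rfl⟩
    · exact eq_empty_iff_forall_notMem.1 hv e (hφ0 ((ht e).symm.trans he))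
    · exact eq_empty_iff_forall_notMem.1 hw e (hφ0 ((hs e).symm.trans he))
  have hdisj : Pairwise (Disjoint on f) := by
    rintro (⟨v, hv⟩ | ⟨w, hw⟩) (⟨v', hv'⟩ | ⟨w', hw'⟩) hne
    · refine disjoint_left.2 fun e he he' => hne ?_
      obtain rfl := hφ0 (Eq.trans (Eq.symm he) he')
      rfl
    · exact disjoint_iff_inter_eq_empty.2 (hE3 v w' hv hw')
    · exact (disjoint_iff_inter_eq_empty.2 (hE3 v' w hv' hw)).symm
    · refine disjoint_left.2 fun e he he' => hne ?_
      obtain rfl := hφ0 (Eq.trans (Eq.symm he) he')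
      rfl
  have hcard : (range φ1)ᶜ.ncard ≤ Nat.card ({v | IsSource t v} ⊕ {w | IsSink s w}) := by
    have := ncard_add_ncard_compl (range φ1)
    rw [ncard_range_of_injective hφ1] at this
    rw [Nat.card_sum, Nat.card_coe_set_eq, Nat.card_coe_set_eq]
    omega
  obtain ⟨hsing, hcover⟩ :=
    subsingleton_and_subset_iUnion_of_ncard_le (toFinite _) hne hsub hdisj hcard
  obtain ⟨⟨v, hv⟩ | ⟨w, hw⟩, he⟩ := mem_iUnion.1 (hcover he')
  exacts [Or.inl ⟨v, hv, he, hsing (.inl ⟨v, hv⟩)⟩, Or.inr ⟨w, hw, he, hsing (.inr ⟨w, hw⟩)⟩]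

theorem IsCPP.inE_subset_hull_image [LinearOrder E'] [Fintype V] [Finite E']
    (h : IsCPP s t s' t' (· ≤ ·) φ0 φ1) {v : V} (hv : (inE t v).Nonempty) :
    inE t' (φ0 v) ⊆ hull (· ≤ ·) (φ1 '' inE t v) := by
  obtain ⟨hφ0, -, -, ht, -, -, -, -, hE4⟩ := id h
  refine (subset_hull_inter_of_between (X := range φ1) (toFinite _) fun m hm hmr => ?_).trans
    (hull_mono ?_)
  · rcases h.exists_isSource_or_exists_isSink hmr with ⟨u, hu, hmu, -⟩ | ⟨w, -, hmw, hsing⟩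
    · exact absurd (hφ0 (hmu.symm.trans hm) ▸ hu) hv.ne_empty
    have hin : m ∉ inputE s' t' := fun hin =>
      (h.not_isSource_and_not_isSink_s19 w).1 (hmw ▸ (hin : IsSource t' (s' m)))
    have hout : m ∉ outputE s' t' := fun hout =>
      (h.not_isSource_and_not_isSink_s19 v).2 (hm ▸ (hout : IsSink s' (t' m)))
    rcases hE4 m hmr hin hout with ⟨⟨a, ha, ham⟩, -⟩ | ⟨⟨a, ha, ham⟩, b, hb, hmb⟩
    · exact absurd (hsing (Eq.trans ha hmw) hmw) ham.2
    · exact ⟨⟨a, Eq.trans ha hm, lt_iff_le_and_ne.2 ham⟩, b, Eq.trans hb hm,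
        lt_iff_le_and_ne.2 hmb⟩
  · rintro _ ⟨hx, e, rfl⟩
    exact ⟨e, hφ0 ((ht e).symm.trans hx), rfl⟩

theorem IsCPP.outE_subset_hull_image [LinearOrder E'] [Fintype V] [Finite E']
    (h : IsCPP s t s' t' (· ≤ ·) φ0 φ1) {v : V} (hv : (outE s v).Nonempty) :
    outE s' (φ0 v) ⊆ hull (· ≤ ·) (φ1 '' outE s v) := by
  obtain ⟨hφ0, -, hs, -, -, -, -, -, hE4⟩ := id h
  refine (subset_hull_inter_of_between (X := range φ1) (toFinite _) fun m hm hmr => ?_).trans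
    (hull_mono ?_)
  · rcases h.exists_isSource_or_exists_isSink hmr with ⟨u, -, hmu, hsing⟩ | ⟨w, hw, hmw, -⟩
    swap
    · exact absurd (hφ0 (hmw.symm.trans hm) ▸ hw) hv.ne_empty
    have hin : m ∉ inputE s' t' := fun hin =>
      (h.not_isSource_and_not_isSink_s19 v).1 (hm ▸ (hin : IsSource t' (s' m)))
    have hout : m ∉ outputE s' t' := fun hout =>
      (h.not_isSource_and_not_isSink_s19 u).2 (hmu ▸ (hout : IsSink s' (t' m)))
    rcases hE4 m hmr hin hout with ⟨⟨a, ha, ham⟩, b, hb, hmb⟩ | ⟨⟨a, ha, ham⟩, -⟩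
    · exact ⟨⟨a, Eq.trans ha hm, lt_iff_le_and_ne.2 ham⟩, b, Eq.trans hb hm,
        lt_iff_le_and_ne.2 hmb⟩
    · exact absurd (hsing (Eq.trans ha hmu) hmu) ham.2
  · rintro _ ⟨hx, e, rfl⟩
    exact ⟨e, hφ0 ((hs e).symm.trans hx), rfl⟩

variable [LinearOrder E] [LinearOrder E']

theorem IsCPP.u1 (h : IsCPP s t s' t' (· ≤ ·) φ0 φ1) (hφ1 : StrictMono φ1) :
    U1 s t (· ≤ ·) := by
  obtain ⟨-, -, hs, ht, ⟨-, -, hU1, -⟩, -⟩ := h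
  exact fun a b hab => lt_iff_le_and_ne.1 (hφ1.lt_iff_lt.1 (lt_of_eReach hU1 (hab.map hs ht)))

variable [Fintype V] [Finite E']

theorem IsCPP.hull_inE (h : IsCPP s t s' t' (· ≤ ·) φ0 φ1) (hφ1 : StrictMono φ1) {v : V}
    (hv : (inE t v).Nonempty) :
    hull (· ≤ ·) (inE t v) = φ1 ⁻¹' hull (· ≤ ·) (inE t' (φ0 v)) := by
  rw [hφ1.hull_eq_preimage, (hull_mono (h.image_inE_subset v)).antisymm
    (hull_subset_of_subset_hull (h.inE_subset_hull_image hv))]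

theorem IsCPP.hull_outE (h : IsCPP s t s' t' (· ≤ ·) φ0 φ1) (hφ1 : StrictMono φ1) {v : V}
    (hv : (outE s v).Nonempty) :
    hull (· ≤ ·) (outE s v) = φ1 ⁻¹' hull (· ≤ ·) (outE s' (φ0 v)) := by
  rw [hφ1.hull_eq_preimage, (hull_mono (h.image_outE_subset v)).antisymm
    (hull_subset_of_subset_hull (h.outE_subset_hull_image hv))]

theorem IsCPP.u2 (h : IsCPP s t s' t' (· ≤ ·) φ0 φ1) (hφ1 : StrictMono φ1) :
    U2 s t (· ≤ ·) := by
  obtain ⟨-, -, hs, ht, ⟨-, -, hU1, hP2⟩, -⟩ := id h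
  refine u2_of_mem_hull (h.u1 hφ1) fun v a b y ha hb hay hyb => ?_
  rw [h.hull_inE hφ1 ⟨a, ha⟩, h.hull_outE hφ1 ⟨b, hb⟩]
  exact mem_hull_inE_union_hull_outE hU1 hP2 ((ht a).trans (congrArg φ0 ha))
    ((hs b).trans (congrArg φ0 hb)) (hφ1.monotone hay) (hφ1.monotone hyb)

theorem IsCPP.u3 (h : IsCPP s t s' t' (· ≤ ·) φ0 φ1) (hφ1 : StrictMono φ1) :
    U3 s t (· ≤ ·) := by
  obtain ⟨-, -, -, -, ⟨-, -, hU1, hP2⟩, -⟩ := id h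
  refine fun v w => ⟨fun ⟨e, he, hew⟩ => ?_, fun ⟨e, he, hew⟩ => ?_⟩
  · have hw : (inE t w).Nonempty := let ⟨a, ha, _⟩ := hew; ⟨a, ha⟩
    rw [h.hull_inE hφ1 hw] at hew
    rw [h.hull_inE hφ1 ⟨e, he⟩, h.hull_inE hφ1 hw]
    exact preimage_mono (hull_inE_subset_of_u1_p2 hU1 hP2 (h.nonempty_outE v)
      (h.nonempty_outE w) ⟨φ1 e, h.image_inE_subset v (mem_image_of_mem φ1 he), hew⟩)
  · have hw : (outE s w).Nonempty := let ⟨a, ha, _⟩ := hew; ⟨a, ha⟩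
    rw [h.hull_outE hφ1 hw] at hew
    rw [h.hull_outE hφ1 ⟨e, he⟩, h.hull_outE hφ1 hw]
    exact preimage_mono (hull_outE_subset_of_u1_p2 hU1 hP2 (h.nonempty_inE v)
      (h.nonempty_inE w) ⟨φ1 e, h.image_outE_subset v (mem_image_of_mem φ1 he), hew⟩)

theorem IsCPP.isUPO (h : IsCPP s t s' t' (· ≤ ·) φ0 φ1) (hφ1 : StrictMono φ1) :
    IsUPO s t (· ≤ ·) :=
  ⟨inferInstance, h.u1 hφ1, h.u2 hφ1, h.u3 hφ1⟩

end Extension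

theorem cpp_induces_upo_general {V E V' E' : Type} [Fintype V] [Fintype E']
    (s t : E → V) (s' t' : E' → V') (le' : E' → E' → Prop)
    (φ0 : V → V') (φ1 : E → E')
    (hCPP : IsCPP s t s' t' le' φ0 φ1) :
    IsUPO s t (fun a b => le' (φ1 a) (φ1 b)) := by
  obtain ⟨-, hφ1, -, -, ⟨-, hlin, -⟩, -⟩ := id hCPP
  let _ : LinearOrder E' := linearOrderOfIsLinearOrder le'
  let _ : LinearOrder E := LinearOrder.lift' φ1 hφ1
  -- the lifted order on `E` is `fun a b => le' (φ1 a) (φ1 b)`, so `φ1` is strictly monotone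
  exact hCPP.isUPO fun _ _ hab => hab

/-- any CPP-extension of an acyclic directed graph `G` induces an upward
planar order on `E(G)`. -/
theorem cpp_induces_upo {V E V' E' : Type} [Fintype V] [Fintype E] [Fintype V'] [Fintype E']
    (s t : E → V) (s' t' : E' → V') (le' : E' → E' → Prop)
    (φ0 : V → V') (φ1 : E → E') (hac : Acyclic s t)
    (hCPP : IsCPP s t s' t' le' φ0 φ1) :
    IsUPO s t (fun a b => le' (φ1 a) (φ1 b)) :=
  cpp_induces_upo_general s t s' t' le' φ0 φ1 hCPP
end
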